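/- arXiv:1705.11107 — 2 statements merged into one kernel-verified Lean document; each statement's English description precedes it below -/
import Mathlib

section
/- Let s ≥ 1 and for every nonempty subset A ⊆ [s] let T^A be a centered real tensor indexed by ∏_{i∈A}[d_i]. Define T(a₁,…,a_s) = ∑_{∅≠A⊆[s]} T^A((a_i)_{i∈A}) and suppose every entry of T is bounded in absolute value by μ. Then for every nonempty A ⊆ [s] with |A| = ℓ, every entry of T^A is bounded in absolute value by μ·ℓ^ℓ. -/
/-!
Fix the coordinates in `A` at `a` and sum `T = ∑_{B ≠ ∅} T^B` over the remaining coordinates: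
every `T^B` with `B ⊄ A` is centered in a free coordinate and disappears, while every `T^B` with
`B ⊆ A` is constant on the fiber. Hence `|∑_{∅ ≠ B ⊆ A} T^B(a)| ≤ μ` for every `A`. Peeling off
the proper subsets of `A` and inducting gives `|T^A(a)| ≤ μ g(|A|)` for any `g` with `g 0 = 1`
and `g n ≥ ∑_{m<n} C(n,m) g m`, and `g n = n^n` qualifies because
`∑_{m<n} C(n,m) m^m ≤ ∑_{m≤n} C(n,m) (n-1)^m = n^n`.
-/

open Finset Function

theorem Nat.sum_range_choose_mul_pow_self_le (n : ℕ) :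
    ∑ m ∈ range n, n.choose m * m ^ m ≤ n ^ n := by
  obtain _ | k := n
  · simp
  calc ∑ m ∈ range (k + 1), (k + 1).choose m * m ^ m
      ≤ ∑ m ∈ range (k + 1), k ^ m * 1 ^ (k + 1 - m) * (k + 1).choose m := by
        refine sum_le_sum fun m hm => ?_
        rw [one_pow, mul_one, mul_comm]
        gcongr
        exact Nat.lt_succ_iff.mp (mem_range.mp hm)
    _ ≤ ∑ m ∈ range (k + 1 + 1), k ^ m * 1 ^ (k + 1 - m) * (k + 1).choose m :=
        sum_le_sum_of_subset (range_subset_range.mpr (Nat.le_succ _))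
    _ = (k + 1) ^ (k + 1) := (add_pow _ _ _).symm

namespace CenteredTensor

section Combinatorics

variable {ι : Type*} [DecidableEq ι]

theorem abs_le_mul_of_abs_sum_powerset_le (t : Finset ι → ℝ) (μ : ℝ) (g : ℕ → ℝ)
    (hg0 : g 0 = 1) (hg : ∀ n, 0 < n → ∑ m ∈ range n, n.choose m * g m ≤ g n)
    (ht : ∀ A : Finset ι, |∑ B ∈ A.powerset with B.Nonempty, t B| ≤ μ) :
    ∀ A : Finset ι, A.Nonempty → |t A| ≤ μ * g #A := by
  have hμ : 0 ≤ μ := by simpa [filter_singleton] using ht ∅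
  intro A
  induction A using Finset.strongInduction with
  | H A ih =>
  intro hA
  set P := {B ∈ A.powerset | B.Nonempty}
  have hAP : A ∈ P := by simp [P, hA]
  have hsplit : t A = ∑ B ∈ P, t B - ∑ B ∈ P.erase A, t B := by
    rw [← add_sum_erase _ _ hAP]; ring
  have hpowerset : ∑ B ∈ A.powerset, g #B = g #A + ∑ B ∈ P.erase A, g #B + g 0 := by
    rw [← sum_filter_add_sum_filter_not _ Finset.Nonempty, ← add_sum_erase _ _ hAP]
    simp [not_nonempty_iff_eq_empty, filter_eq']
  have hrec : ∑ B ∈ P.erase A, g #B + g 0 = ∑ m ∈ range #A, (#A).choose m * g m := by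
    have := sum_powerset_apply_card g (x := A)
    simp only [sum_range_succ, Nat.choose_self, nsmul_eq_mul, Nat.cast_one, one_mul] at this
    linarith
  calc |t A| ≤ |∑ B ∈ P, t B| + ∑ B ∈ P.erase A, |t B| := by
        rw [hsplit]
        exact (abs_sub _ _).trans (add_le_add_right (abs_sum_le_sum_abs _ _) _)
    _ ≤ μ + ∑ B ∈ P.erase A, μ * g #B := by
        refine add_le_add (ht A) (sum_le_sum fun B hB => ?_)
        obtain ⟨hBA, hB⟩ := mem_erase.mp hB
        obtain ⟨hBA', hBne⟩ := mem_filter.mp hB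
        exact ih B (Finset.ssubset_iff_subset_ne.mpr ⟨mem_powerset.mp hBA', hBA⟩) hBne
    _ = μ * (∑ B ∈ P.erase A, g #B + g 0) := by rw [hg0, mul_add, mul_sum, mul_one, add_comm]
    _ ≤ μ * g #A := by
        rw [hrec]; exact mul_le_mul_of_nonneg_left (hg _ hA.card_pos) hμ

end Combinatorics

section Fiber

variable {ι : Type*} [Fintype ι] [DecidableEq ι] {β : ι → Type*} [∀ i, Fintype (β i)]
  {M : Type*} [AddCommMonoid M]

theorem sum_eq_zero_of_sum_update_eq_zero {g : (∀ i, β i) → M} (i : ι)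
    (hg : ∀ b, ∑ x, g (update b i x) = 0) : ∑ b, g b = 0 := by
  rw [← (Equiv.piSplitAt i β).symm.sum_comp, Fintype.sum_prod_type_right]
  refine sum_eq_zero fun c _ => ?_
  rcases isEmpty_or_nonempty (β i) with _ | ⟨⟨y⟩⟩
  · simp
  · rw [← hg ((Equiv.piSplitAt i β).symm (y, c))]
    refine sum_congr rfl fun x _ => congrArg g (funext fun j => ?_)
    by_cases hj : j = i
    · subst hj; simp
    · simp [hj]

variable [∀ i, DecidableEq (β i)]

def fiber (A : Finset ι) (a : ∀ i, β i) : Finset (∀ i, β i) := {b | ∀ j ∈ A, b j = a j}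

theorem mem_fiber {A : Finset ι} {a b : ∀ i, β i} : b ∈ fiber A a ↔ ∀ j ∈ A, b j = a j := by
  simp [fiber]

theorem sum_fiber_eq_zero_of_sum_update_eq_zero {f : (∀ i, β i) → M} {A : Finset ι} {i : ι}
    (hi : i ∉ A) (hf : ∀ b, ∑ x, f (update b i x) = 0) (a : ∀ i, β i) :
    ∑ b ∈ fiber A a, f b = 0 := by
  rw [fiber, sum_filter]
  refine sum_eq_zero_of_sum_update_eq_zero i fun b => ?_
  have hagree : ∀ x, (∀ j ∈ A, update b i x j = a j) ↔ ∀ j ∈ A, b j = a j := fun x =>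
    forall₂_congr fun j hj => by rw [update_of_ne (ne_of_mem_of_not_mem hj hi)]
  simp only [hagree]
  split_ifs <;> simp [hf]

theorem sum_fiber_eq_card_smul {f : (∀ i, β i) → M} {A : Finset ι} (hf : DependsOn f A)
    (a : ∀ i, β i) : ∑ b ∈ fiber A a, f b = #(fiber A a) • f a := by
  rw [← sum_const]
  exact sum_congr rfl fun b hb => hf (mem_fiber.mp hb)

theorem sum_fiber_sum_eq_card_smul (TA : Finset ι → (∀ i, β i) → M) (𝓑 : Finset (Finset ι))
    (hdep : ∀ B, DependsOn (TA B) B)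
    (hcent : ∀ B, ∀ i ∈ B, ∀ b, ∑ x, TA B (update b i x) = 0) (A : Finset ι) (a : ∀ i, β i) :
    ∑ b ∈ fiber A a, ∑ B ∈ 𝓑, TA B b = #(fiber A a) • ∑ B ∈ 𝓑 with B ⊆ A, TA B a := by
  rw [sum_comm, sum_filter, smul_sum]
  refine sum_congr rfl fun B _ => ?_
  split_ifs with hBA
  · exact sum_fiber_eq_card_smul ((hdep B).mono hBA) a
  · obtain ⟨i, hiB, hiA⟩ := not_subset.mp hBA
    rw [smul_zero]
    exact sum_fiber_eq_zero_of_sum_update_eq_zero hiA (hcent B i hiB) a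

theorem abs_sum_filter_subset_le (TA : Finset ι → (∀ i, β i) → ℝ) (𝓑 : Finset (Finset ι))
    (μ : ℝ) (hdep : ∀ B, DependsOn (TA B) B)
    (hcent : ∀ B, ∀ i ∈ B, ∀ b, ∑ x, TA B (update b i x) = 0)
    (hT : ∀ b, |∑ B ∈ 𝓑, TA B b| ≤ μ) (A : Finset ι) (a : ∀ i, β i) :
    |∑ B ∈ 𝓑 with B ⊆ A, TA B a| ≤ μ := by
  have hS : (0 : ℝ) < #(fiber A a) := by
    exact_mod_cast card_pos.mpr ⟨a, mem_fiber.mpr fun _ _ => rfl⟩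
  refine le_of_mul_le_mul_left ?_ hS
  calc #(fiber A a) * |∑ B ∈ 𝓑 with B ⊆ A, TA B a|
      = |∑ b ∈ fiber A a, ∑ B ∈ 𝓑, TA B b| := by
        rw [sum_fiber_sum_eq_card_smul TA 𝓑 hdep hcent, nsmul_eq_mul, abs_mul, abs_of_pos hS]
    _ ≤ ∑ b ∈ fiber A a, |∑ B ∈ 𝓑, TA B b| := abs_sum_le_sum_abs _ _
    _ ≤ ∑ b ∈ fiber A a, μ := sum_le_sum fun b _ => hT b
    _ = #(fiber A a) * μ := by rw [sum_const, nsmul_eq_mul]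

end Fiber

end CenteredTensor

open CenteredTensor in
theorem stmt_12_general (s : ℕ) (d : Fin s → ℕ)
    (TA : Finset (Fin s) → (∀ i : Fin s, Fin (d i)) → ℝ) (μ : ℝ)
    (hdep : ∀ (A : Finset (Fin s)) (a b : ∀ i : Fin s, Fin (d i)),
      (∀ i ∈ A, a i = b i) → TA A a = TA A b)
    (hcent : ∀ (A : Finset (Fin s)), ∀ i ∈ A, ∀ a : ∀ j : Fin s, Fin (d j),
      ∑ x : Fin (d i), TA A (Function.update a i x) = 0)
    (hT : ∀ a : ∀ i : Fin s, Fin (d i),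
      |∑ A ∈ Finset.univ.filter (fun A : Finset (Fin s) => A.Nonempty), TA A a| ≤ μ) :
    ∀ A : Finset (Fin s), A.Nonempty →
      ∀ a : ∀ i : Fin s, Fin (d i), |TA A a| ≤ μ * (A.card : ℝ) ^ (A.card : ℕ) := by
  intro A hA a
  have hpartial (C : Finset (Fin s)) : |∑ B ∈ C.powerset with B.Nonempty, TA B a| ≤ μ := by
    convert abs_sum_filter_subset_le TA _ μ (fun B _ _ h => hdep B _ _ h) hcent hT C a using 3
    ext B
    simp [and_comm]
  exact abs_le_mul_of_abs_sum_powerset_le (fun B => TA B a) μ (fun n => (n : ℝ) ^ n) (by simp)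
    (fun n _ => mod_cast Nat.sum_range_choose_mul_pow_self_le n) hpartial A hA

theorem stmt_12 (s : ℕ) (hs : 0 < s) (d : Fin s → ℕ) (hd : ∀ i, 0 < d i)
    (TA : Finset (Fin s) → (∀ i : Fin s, Fin (d i)) → ℝ) (μ : ℝ)
    (hdep : ∀ (A : Finset (Fin s)) (a b : ∀ i : Fin s, Fin (d i)),
      (∀ i ∈ A, a i = b i) → TA A a = TA A b)
    (hcent : ∀ (A : Finset (Fin s)), ∀ i ∈ A, ∀ a : ∀ j : Fin s, Fin (d j),
      ∑ x : Fin (d i), TA A (Function.update a i x) = 0)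
    (hT : ∀ a : ∀ i : Fin s, Fin (d i),
      |∑ A ∈ Finset.univ.filter (fun A : Finset (Fin s) => A.Nonempty), TA A a| ≤ μ) :
    ∀ A : Finset (Fin s), A.Nonempty →
      ∀ a : ∀ i : Fin s, Fin (d i), |TA A a| ≤ μ * (A.card : ℝ) ^ (A.card : ℕ) :=
  stmt_12_general s d TA μ hdep hcent hT
end

section
/- Let s ≥ 1, let T^{[s]} be a centered tensor (all fibers sum to zero) with some entry of absolute value at least κ > 0, and for every nonempty proper subset A ⊊ [s] let T^A be an arbitrary centered tensor. Define T(a₁,…,a_s) = ∑_{∅≠A⊆[s]} T^A((a_i)_{i∈A}). Then some entry of T has absolute value at least κ/s^s. -/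
/-!
Write `T = ∑_{A ≠ ∅} T^A` and let `E_B` average out the coordinates in `B`. The alternating sum
`∑_B (-1)^|B| E_B` kills every centered `T^A` with `A ≠ [s]`: the terms with `B ∩ A ≠ ∅` vanish by
centering, and the remaining ones cancel because `∑_{B ⊆ Aᶜ} (-1)^|B| = 0`. On `T^{[s]}` it is the
identity. Since `E_{[s]} T = 0` and `|E_B T| ≤ max |T|`, this gives
`κ ≤ (2^s - 1) max |T| ≤ s^s max |T|`.
-/

open Finset

namespace CenteredTensor

variable {ι : Type*} [Fintype ι] [DecidableEq ι] {α : ι → Type*} [∀ i, Fintype (α i)]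
  {G : Type*} [AddCommGroup G]

def IsCenteredAt (f : (∀ i, α i) → G) (i : ι) : Prop :=
  ∀ a, ∑ x, f (Function.update a i x) = 0

theorem IsCenteredAt.sum_eq_zero {f : (∀ i, α i) → G} {i : ι} (hf : IsCenteredAt f i) :
    ∑ a, f a = 0 := by
  rw [← (Equiv.piSplitAt i α).symm.sum_comp, Fintype.sum_prod_type_right]
  refine Finset.sum_eq_zero fun r _ => ?_
  rcases isEmpty_or_nonempty (α i) with hα | ⟨⟨y⟩⟩
  · exact Finset.sum_of_isEmpty _
  · have hupdate : ∀ x, (Equiv.piSplitAt i α).symm (x, r) =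
        Function.update ((Equiv.piSplitAt i α).symm (y, r)) i x := by
      intro x
      ext j
      rcases eq_or_ne j i with rfl | hj
      · simp [Equiv.piSplitAt_symm_apply]
      · simp [Equiv.piSplitAt_symm_apply, hj]
    exact (Finset.sum_congr rfl fun x _ => congrArg f (hupdate x)).trans (hf _)

def resampleSum (f : (∀ i, α i) → G) (B : Finset ι) (a : ∀ i, α i) : G :=
  ∑ b, f (B.piecewise b a)

theorem resampleSum_eq_zero {f : (∀ i, α i) → G} {i : ι} {B : Finset ι}
    (hf : IsCenteredAt f i) (hi : i ∈ B) (a : ∀ i, α i) : resampleSum f B a = 0 :=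
  IsCenteredAt.sum_eq_zero fun b => by
    simpa only [Finset.update_piecewise_of_mem B b a hi] using hf (B.piecewise b a)

theorem resampleSum_of_disjoint {f : (∀ i, α i) → G} {A B : Finset ι}
    (hf : DependsOn f A) (hAB : Disjoint A B) (a : ∀ i, α i) :
    resampleSum f B a = Fintype.card (∀ i, α i) • f a := by
  rw [resampleSum, ← Finset.card_univ, ← Finset.sum_const]
  refine Finset.sum_congr rfl fun b _ => hf fun i hi => ?_
  exact Finset.piecewise_eq_of_notMem _ _ _ (Finset.disjoint_left.1 hAB hi)

theorem resampleSum_sum {κ : Type*} (t : Finset κ) (f : κ → (∀ i, α i) → G) (B : Finset ι)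
    (a : ∀ i, α i) :
    resampleSum (fun b => ∑ k ∈ t, f k b) B a = ∑ k ∈ t, resampleSum (f k) B a :=
  Finset.sum_comm

/-- `N` times the top-order component of `f` at `a`, where `N` is the number of grid points:
the component is `∑_B (-1)^|B| E_B f`, with `E_B` averaging out the coordinates in `B`. -/
def topComponentSum (f : (∀ i, α i) → G) (a : ∀ i, α i) : G :=
  ∑ B : Finset ι, (-1 : ℤ) ^ #B • resampleSum f B a

theorem topComponentSum_sum {κ : Type*} (t : Finset κ) (f : κ → (∀ i, α i) → G)
    (a : ∀ i, α i) :
    topComponentSum (fun b => ∑ k ∈ t, f k b) a = ∑ k ∈ t, topComponentSum (f k) a := by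
  simp only [topComponentSum, resampleSum_sum, Finset.smul_sum]
  exact Finset.sum_comm

theorem topComponentSum_of_dependsOn {f : (∀ i, α i) → G} {A : Finset ι}
    (hdep : DependsOn f A) (hcent : ∀ i ∈ A, IsCenteredAt f i) (a : ∀ i, α i) :
    topComponentSum f a = if A = univ then Fintype.card (∀ i, α i) • f a else 0 := by
  have hvanish : ∀ B ∈ (univ : Finset (Finset ι)), B ∉ Aᶜ.powerset →
      (-1 : ℤ) ^ #B • resampleSum f B a = 0 := by
    intro B _ hB
    obtain ⟨i, hiB, hiA⟩ : ∃ i ∈ B, i ∈ A := by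
      simpa [Finset.subset_iff] using hB
    rw [resampleSum_eq_zero (hcent i hiA) hiB, smul_zero]
  rw [topComponentSum, ← Finset.sum_subset (subset_univ _) hvanish,
    Finset.sum_congr rfl fun B hB => by
      rw [resampleSum_of_disjoint hdep
        (subset_compl_iff_disjoint_left.1 (Finset.mem_powerset.1 hB))],
    ← Finset.sum_smul, Finset.sum_powerset_neg_one_pow_card]
  by_cases hA : A = univ <;> simp [hA]

theorem abs_topComponentSum_le {f : (∀ i, α i) → ℝ} {M : ℝ} (hsum : ∑ b, f b = 0)
    (hM : ∀ b, |f b| ≤ M) (a : ∀ i, α i) :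
    |topComponentSum f a| ≤ (2 ^ Fintype.card ι - 1) * (Fintype.card (∀ i, α i) * M) := by
  have huniv : (-1 : ℤ) ^ #(univ : Finset ι) • resampleSum f univ a = 0 := by
    simp [resampleSum, hsum]
  have hterm : ∀ B, |(-1 : ℤ) ^ #B • resampleSum f B a| ≤ Fintype.card (∀ i, α i) * M := by
    intro B
    rw [zsmul_eq_mul, abs_mul]
    push_cast
    rw [abs_pow, abs_neg, abs_one, one_pow, one_mul]
    calc |resampleSum f B a| ≤ ∑ b, |f (B.piecewise b a)| := Finset.abs_sum_le_sum_abs _ _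
      _ ≤ ∑ _b : ∀ i, α i, M := Finset.sum_le_sum fun b _ => hM _
      _ = Fintype.card (∀ i, α i) * M := by rw [Finset.sum_const, card_univ, nsmul_eq_mul]
  rw [topComponentSum,
    ← Finset.sum_erase (f := fun B => (-1 : ℤ) ^ #B • resampleSum f B a) univ huniv]
  calc _ ≤ _ := Finset.abs_sum_le_sum_abs _ _
    _ ≤ #((univ : Finset (Finset ι)).erase univ) • (Fintype.card (∀ i, α i) * M) :=
      Finset.sum_le_card_nsmul _ _ _ fun B _ => hterm B
    _ = _ := by
      rw [card_erase_of_mem (mem_univ _), card_univ, Fintype.card_finset, nsmul_eq_mul,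
        Nat.cast_sub Nat.one_le_two_pow]
      push_cast
      ring

end CenteredTensor

theorem two_pow_sub_one_le_pow_self (n : ℕ) : (2 : ℝ) ^ n - 1 ≤ (n : ℝ) ^ n := by
  rcases n with _ | _ | n
  · norm_num
  · norm_num
  · have h : 2 ^ (n + 2) ≤ (n + 2) ^ (n + 2) := Nat.pow_le_pow_left (by omega) _
    have h' : (2 : ℝ) ^ (n + 2) ≤ ((n + 2 : ℕ) : ℝ) ^ (n + 2) := by exact_mod_cast h
    linarith

open CenteredTensor

theorem stmt_13_general (s : ℕ) (hs : 0 < s) (d : Fin s → ℕ)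
    (TA : Finset (Fin s) → (∀ i : Fin s, Fin (d i)) → ℝ) (κ : ℝ)
    (hdep : ∀ (A : Finset (Fin s)) (a b : ∀ i : Fin s, Fin (d i)),
      (∀ i ∈ A, a i = b i) → TA A a = TA A b)
    (hcent : ∀ (A : Finset (Fin s)), ∀ i ∈ A, ∀ a : ∀ j : Fin s, Fin (d j),
      ∑ x : Fin (d i), TA A (Function.update a i x) = 0)
    (hbig : ∃ a : ∀ i : Fin s, Fin (d i), κ ≤ |TA Finset.univ a|) :
    ∃ a : ∀ i : Fin s, Fin (d i),
      κ / (s : ℝ) ^ s ≤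
        |∑ A ∈ Finset.univ.filter (fun A : Finset (Fin s) => A.Nonempty), TA A a| := by
  obtain ⟨a₀, ha₀⟩ := hbig
  set S := univ.filter fun A : Finset (Fin s) => A.Nonempty
  set T : (∀ i, Fin (d i)) → ℝ := fun a => ∑ A ∈ S, TA A a
  obtain ⟨a, -, hmax⟩ := exists_max_image univ (fun a => |T a|) ⟨a₀, mem_univ _⟩
  refine ⟨a, ?_⟩
  set N := Fintype.card (∀ i, Fin (d i))
  have hN : (0 : ℝ) < N := by exact_mod_cast Fintype.card_pos_iff.2 ⟨a₀⟩
  have hS : univ ∈ S := mem_filter.2 ⟨mem_univ _, univ_nonempty_iff.2 ⟨⟨0, hs⟩⟩⟩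
  have htop : topComponentSum T a₀ = N • TA univ a₀ := by
    rw [topComponentSum_sum, Finset.sum_congr rfl fun A _ =>
      topComponentSum_of_dependsOn (fun a b h => hdep A a b h) (hcent A) a₀]
    exact Finset.sum_ite_eq_of_mem' _ _ _ hS
  have hT : ∑ b, T b = 0 := by
    rw [Finset.sum_comm]
    refine Finset.sum_eq_zero fun A hA => ?_
    obtain ⟨i, hi⟩ := (Finset.mem_filter.1 hA).2
    exact IsCenteredAt.sum_eq_zero (hcent A i hi)
  have hbound : N * κ ≤ N * ((s : ℝ) ^ s * |T a|) := calc
    N * κ ≤ |topComponentSum T a₀| := by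
      rw [htop, nsmul_eq_mul, abs_mul, abs_of_pos hN]
      exact mul_le_mul_of_nonneg_left ha₀ hN.le
    _ ≤ (2 ^ s - 1) * (N * |T a|) := by
      simpa only [Fintype.card_fin] using
        abs_topComponentSum_le hT (fun b => hmax b (mem_univ b)) a₀
    _ ≤ (s : ℝ) ^ s * (N * |T a|) := by
      gcongr
      exact two_pow_sub_one_le_pow_self s
    _ = N * ((s : ℝ) ^ s * |T a|) := by ring
  rw [div_le_iff₀' (pow_pos (Nat.cast_pos.2 hs) s)]
  exact le_of_mul_le_mul_left hbound hN

theorem stmt_13 (s : ℕ) (hs : 0 < s) (d : Fin s → ℕ) (hd : ∀ i, 0 < d i)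
    (TA : Finset (Fin s) → (∀ i : Fin s, Fin (d i)) → ℝ) (κ : ℝ) (hκ : 0 < κ)
    (hdep : ∀ (A : Finset (Fin s)) (a b : ∀ i : Fin s, Fin (d i)),
      (∀ i ∈ A, a i = b i) → TA A a = TA A b)
    (hcent : ∀ (A : Finset (Fin s)), ∀ i ∈ A, ∀ a : ∀ j : Fin s, Fin (d j),
      ∑ x : Fin (d i), TA A (Function.update a i x) = 0)
    (hbig : ∃ a : ∀ i : Fin s, Fin (d i), κ ≤ |TA Finset.univ a|) :
    ∃ a : ∀ i : Fin s, Fin (d i),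
      κ / (s : ℝ) ^ s ≤
        |∑ A ∈ Finset.univ.filter (fun A : Finset (Fin s) => A.Nonempty), TA A a| :=
  stmt_13_general s hs d TA κ hdep hcent hbig
end
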